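/- arXiv:1408.3552 — 6 statements merged into one kernel-verified Lean document; each statement's English description precedes it below -/
import Mathlib

section
/- Let w : ℝ → ℝ be twice continuously differentiable with compact support and let φ : ℝ → ℝ be three times continuously differentiable with φ'(x) ≥ 0 for all x and |φ'''(x)| ≤ C for all x, where C ≥ 0. Then ∫_ℝ w'(x) (φ w)''(x) dx ≥ −(C/2) ∫_ℝ w(x)² dx. -/
/-!
Writing `E = (φ'' w² + φ (w')²) / 2`, the Leibniz rule gives the pointwise identity
`w' (φ w)'' = E' + (3/2) φ' (w')² - (1/2) φ''' w²`.
Since `E` has compact support, `∫ E' = 0`; the middle term is nonnegative because `φ' ≥ 0`,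
and the last one is at least `-(C/2) w²` because `φ''' ≤ C`.
-/

open MeasureTheory Function

theorem deriv_deriv_mul {𝕜 𝔸 : Type*} [NontriviallyNormedField 𝕜] [NormedRing 𝔸]
    [NormedAlgebra 𝕜 𝔸] {f g : 𝕜 → 𝔸} {x : 𝕜} (hf : ContDiffAt 𝕜 2 f x)
    (hg : ContDiffAt 𝕜 2 g x) :
    deriv (deriv fun y => f y * g y) x
      = deriv (deriv f) x * g x + 2 * deriv f x * deriv g x + f x * deriv (deriv g) x := by
  simpa [iteratedDeriv_succ, Finset.sum_range_succ, add_comm, add_left_comm]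
    using iteratedDeriv_fun_mul hf hg

theorem HasCompactSupport.integrable_sq_mul {X : Type*} [TopologicalSpace X] [MeasurableSpace X]
    [OpensMeasurableSpace X] {μ : Measure X} [IsFiniteMeasureOnCompacts μ] {f g : X → ℝ}
    (hf : Continuous f) (hfsupp : HasCompactSupport f) (hg : Continuous g) :
    Integrable (fun x => f x ^ 2 * g x) μ :=
  ((hf.pow 2).mul hg).integrable_of_hasCompactSupport
    (hfsupp.comp_left (g := fun t : ℝ => t ^ 2) (zero_pow two_ne_zero)).mul_right

section CompactlySupportedDerivative

variable {E : Type*} [NormedAddCommGroup E] [NormedSpace ℝ E] {f f' : ℝ → E}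

theorem HasCompactSupport.integrable_of_hasDerivAt (hf : HasCompactSupport f)
    (hderiv : ∀ x, HasDerivAt f (f' x) x) (hf' : Continuous f') : Integrable f' := by
  have hf'_eq : f' = deriv f := funext fun x => (hderiv x).deriv.symm
  exact hf'.integrable_of_hasCompactSupport (hf'_eq ▸ hf.deriv)

theorem HasCompactSupport.integral_eq_zero_of_hasDerivAt (hf : HasCompactSupport f)
    (hderiv : ∀ x, HasDerivAt f (f' x) x) (hf' : Continuous f') : ∫ x, f' x = 0 :=
  integral_eq_zero_of_hasDerivAt_of_integrable hderiv (hf.integrable_of_hasDerivAt hderiv hf')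
    ((Differentiable.continuous fun x => (hderiv x).differentiableAt).integrable_of_hasCompactSupport
      hf)

end CompactlySupportedDerivative

theorem integral_deriv_mul_deriv_deriv_mul_eq {w φ : ℝ → ℝ} (hw : ContDiff ℝ 2 w)
    (hwsupp : HasCompactSupport w) (hφ : ContDiff ℝ 3 φ) :
    ∫ x, deriv w x * deriv (deriv fun y => φ y * w y) x
      = 3 / 2 * (∫ x, deriv w x ^ 2 * deriv φ x)
        - 1 / 2 * ∫ x, w x ^ 2 * deriv (deriv (deriv φ)) x := by
  set energy : ℝ → ℝ := fun x => (deriv (deriv φ) x * w x ^ 2 + φ x * deriv w x ^ 2) / 2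
  set energy' : ℝ → ℝ := fun x => (deriv (deriv (deriv φ)) x * w x ^ 2
      + 2 * deriv (deriv φ) x * w x * deriv w x + deriv φ x * deriv w x ^ 2
      + 2 * φ x * deriv w x * deriv (deriv w) x) / 2
  have henergy : ∀ x, HasDerivAt energy (energy' x) x := by
    intro x
    have hφ'' : Differentiable ℝ (deriv (deriv φ)) := by fun_prop (disch := norm_num)
    have hw' : Differentiable ℝ (deriv w) := by fun_prop (disch := norm_num)
    refine ((((hφ''.differentiableAt.hasDerivAt).fun_mul
      ((hw.differentiable two_ne_zero x).hasDerivAt.fun_pow 2)).fun_add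
      ((hφ.differentiable (by norm_num) x).hasDerivAt.fun_mul
      (hw'.differentiableAt.hasDerivAt.fun_pow 2))).div_const 2).congr_deriv ?_
    ring
  have hsupp : HasCompactSupport energy := hwsupp.mono' <| support_subset_iff'.2 fun x hx => by
    have hw'x : deriv w x = 0 :=
      image_eq_zero_of_notMem_tsupport fun h => hx (tsupport_deriv_subset h)
    simp [energy, image_eq_zero_of_notMem_tsupport hx, hw'x]
  have henergy'_cont : Continuous energy' := by fun_prop (disch := norm_num)
  have hpointwise : ∀ x, deriv w x * deriv (deriv fun y => φ y * w y) x
      = energy' x + (3 / 2 * (deriv w x ^ 2 * deriv φ x)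
          - 1 / 2 * (w x ^ 2 * deriv (deriv (deriv φ)) x)) := by
    intro x
    rw [deriv_deriv_mul (hφ.of_le (by norm_num)).contDiffAt hw.contDiffAt]
    ring
  have hw'_sq : Integrable fun x => deriv w x ^ 2 * deriv φ x :=
    hwsupp.deriv.integrable_sq_mul (by fun_prop (disch := norm_num))
      (by fun_prop (disch := norm_num))
  have hw_sq : Integrable fun x => w x ^ 2 * deriv (deriv (deriv φ)) x :=
    hwsupp.integrable_sq_mul hw.continuous (by fun_prop (disch := norm_num))
  have hrest : Integrable fun x => 3 / 2 * (deriv w x ^ 2 * deriv φ x)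
      - 1 / 2 * (w x ^ 2 * deriv (deriv (deriv φ)) x) :=
    (hw'_sq.const_mul _).sub (hw_sq.const_mul _)
  rw [integral_congr_ae (.of_forall hpointwise),
    integral_add (hsupp.integrable_of_hasDerivAt henergy henergy'_cont) hrest,
    hsupp.integral_eq_zero_of_hasDerivAt henergy henergy'_cont, zero_add,
    integral_sub (hw'_sq.const_mul _) (hw_sq.const_mul _), integral_const_mul, integral_const_mul]

theorem integral_deriv_mul_deriv_deriv_weight_lower_bound_general
    (w φ : ℝ → ℝ) (C : ℝ)
    (hw : ContDiff ℝ 2 w) (hwsupp : HasCompactSupport w)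
    (hφ : ContDiff ℝ 3 φ)
    (hφ' : ∀ x, 0 ≤ deriv φ x)
    (hφ''' : ∀ x, |deriv (deriv (deriv φ)) x| ≤ C) :
    ∫ x : ℝ, deriv w x * deriv (deriv (fun y => φ y * w y)) x
      ≥ -(C / 2) * ∫ x : ℝ, (w x) ^ 2 := by
  have hφ'''_cont : Continuous (deriv (deriv (deriv φ))) := by fun_prop (disch := norm_num)
  have hdissipation : 0 ≤ ∫ x, deriv w x ^ 2 * deriv φ x :=
    integral_nonneg fun x => mul_nonneg (sq_nonneg _) (hφ' x)
  have hremainder : ∫ x, w x ^ 2 * deriv (deriv (deriv φ)) x ≤ (∫ x, w x ^ 2) * C := by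
    rw [← integral_mul_const]
    exact integral_mono (hwsupp.integrable_sq_mul hw.continuous hφ'''_cont)
      (hwsupp.integrable_sq_mul hw.continuous continuous_const)
      fun x => mul_le_mul_of_nonneg_left (le_of_abs_le (hφ''' x)) (sq_nonneg _)
  rw [integral_deriv_mul_deriv_deriv_mul_eq hw hwsupp hφ]
  linarith

/-- If `w` is C² with compact support, `φ` is C³ with `φ' ≥ 0` and `|φ'''| ≤ C` (with `C ≥ 0`),
then `∫ w' (φ w)'' ≥ −(C/2) ∫ w²`. -/
theorem integral_deriv_mul_deriv_deriv_weight_lower_bound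
    (w φ : ℝ → ℝ) (C : ℝ) (hC : 0 ≤ C)
    (hw : ContDiff ℝ 2 w) (hwsupp : HasCompactSupport w)
    (hφ : ContDiff ℝ 3 φ)
    (hφ' : ∀ x, 0 ≤ deriv φ x)
    (hφ''' : ∀ x, |deriv (deriv (deriv φ)) x| ≤ C) :
    ∫ x : ℝ, deriv w x * deriv (deriv (fun y => φ y * w y)) x
      ≥ -(C / 2) * ∫ x : ℝ, (w x) ^ 2 :=
  integral_deriv_mul_deriv_deriv_weight_lower_bound_general w φ C hw hwsupp hφ hφ' hφ'''
end

section
/- Let u : ℝ → ℝ be continuously differentiable with compact support and let φ : ℝ → ℝ be twice continuously differentiable with φ'(x) ≥ 0 for all x. Then for every x ∈ ℝ, u(x)² φ'(x) ≤ 2 (∫_ℝ (u'(t))² φ'(t) dt)^{1/2} (∫_ℝ u(t)² φ'(t) dt)^{1/2} + ∫_ℝ u(t)² |φ''(t)| dt. -/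
/-!
By the fundamental theorem of calculus on `(-∞, x]`, `u(x)² φ'(x)` is bounded by the total
variation `∫ |(u² φ')'|`, and `|(u² φ')'| ≤ 2 |u'| |u| φ' + u² |φ''|`. The cross term is bounded
by Cauchy–Schwarz for the measure with density `φ' ≥ 0`, i.e. for the functions `|u'| √φ'` and
`|u| √φ'`.
-/

open MeasureTheory

lemma HasCompactSupport.le_integral_abs_deriv {g : ℝ → ℝ} (hg : ContDiff ℝ 1 g)
    (hsupp : HasCompactSupport g) (x : ℝ) : g x ≤ ∫ t, |deriv g t| := by
  have hint : Integrable (deriv g) :=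
    (hg.continuous_deriv le_rfl).integrable_of_hasCompactSupport hsupp.deriv
  calc g x = ∫ t in Set.Iic x, deriv g t := (hsupp.integral_Iic_deriv_eq hg x).symm
    _ ≤ ∫ t in Set.Iic x, |deriv g t| :=
      (le_abs_self _).trans abs_integral_le_integral_abs
    _ ≤ ∫ t, |deriv g t| :=
      setIntegral_le_integral hint.abs (.of_forall fun t => abs_nonneg _)

lemma integral_mul_le_sqrt_mul_sqrt {α : Type*} [MeasurableSpace α] {μ : Measure α}
    {f g : α → ℝ} (hf0 : 0 ≤ f) (hg0 : 0 ≤ g) (hf : MemLp f 2 μ) (hg : MemLp g 2 μ) :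
    ∫ a, f a * g a ∂μ ≤ √(∫ a, f a ^ 2 ∂μ) * √(∫ a, g a ^ 2 ∂μ) := by
  have := integral_mul_le_Lp_mul_Lq_of_nonneg Real.HolderConjugate.two_two
    (.of_forall hf0) (.of_forall hg0) (by simpa using hf) (by simpa using hg)
  simpa [Real.sqrt_eq_rpow, Real.rpow_two] using this

lemma integral_abs_mul_abs_mul_le_sqrt_mul_sqrt {X : Type*} [TopologicalSpace X]
    [MeasurableSpace X] [OpensMeasurableSpace X] {μ : Measure X} [IsFiniteMeasureOnCompacts μ]
    {f g w : X → ℝ} (hf : Continuous f) (hg : Continuous g) (hw : Continuous w)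
    (hw0 : ∀ t, 0 ≤ w t) (hfs : HasCompactSupport f) (hgs : HasCompactSupport g) :
    ∫ t, |f t| * |g t| * w t ∂μ
      ≤ √(∫ t, f t ^ 2 * w t ∂μ) * √(∫ t, g t ^ 2 * w t ∂μ) := by
  have hsq : ∀ (h : X → ℝ) t, (|h t| * √(w t)) ^ 2 = h t ^ 2 * w t := fun h t => by
    rw [mul_pow, sq_abs, Real.sq_sqrt (hw0 t)]
  have hmemLp : ∀ h : X → ℝ, Continuous h → HasCompactSupport h →
      MemLp (fun t => |h t| * √(w t)) 2 μ := fun h hc hs =>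
    (by fun_prop : Continuous fun t => |h t| * √(w t)).memLp_of_hasCompactSupport
      (hs.abs.mul_right)
  have := integral_mul_le_sqrt_mul_sqrt (fun t => by positivity) (fun t => by positivity)
    (hmemLp f hf hfs) (hmemLp g hg hgs)
  simp only [hsq] at this
  convert this using 3 with t
  rw [mul_mul_mul_comm, Real.mul_self_sqrt (hw0 t)]

lemma abs_deriv_sq_mul_le {u w : ℝ → ℝ} {t : ℝ} (hu : DifferentiableAt ℝ u t)
    (hw : DifferentiableAt ℝ w t) (hw0 : 0 ≤ w t) :
    |deriv (fun s => u s ^ 2 * w s) t|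
      ≤ 2 * (|deriv u t| * |u t| * w t) + u t ^ 2 * |deriv w t| := by
  rw [((hu.hasDerivAt.fun_pow 2).fun_mul hw.hasDerivAt).deriv]
  refine (abs_add_le _ _).trans_eq ?_
  simp only [Nat.cast_ofNat, abs_mul, abs_pow, sq_abs, abs_two, abs_of_nonneg hw0]
  ring

/-- Weighted supremum estimate: for `u` C¹ with compact support and `φ` C² with `φ' ≥ 0`,
`u(x)² φ'(x) ≤ 2 (∫ (u')² φ')^{1/2} (∫ u² φ')^{1/2} + ∫ u² |φ''|`. -/
theorem weighted_sup_estimate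
    (u φ : ℝ → ℝ) (hu : ContDiff ℝ 1 u) (husupp : HasCompactSupport u)
    (hφ : ContDiff ℝ 2 φ) (hφ' : ∀ x, 0 ≤ deriv φ x) (x : ℝ) :
    (u x) ^ 2 * deriv φ x
      ≤ 2 * Real.sqrt (∫ t : ℝ, (deriv u t) ^ 2 * deriv φ t)
          * Real.sqrt (∫ t : ℝ, (u t) ^ 2 * deriv φ t)
        + ∫ t : ℝ, (u t) ^ 2 * |deriv (deriv φ) t| := by
  have hφ1 : ContDiff ℝ 1 (deriv φ) := hφ.deriv'
  have hφ'_cont : Continuous (deriv φ) := hφ1.continuous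
  have hφ''_cont : Continuous (deriv (deriv φ)) := hφ1.continuous_deriv le_rfl
  have hu'_cont : Continuous (deriv u) := hu.continuous_deriv le_rfl
  have hsupp : ∀ f : ℝ → ℝ, (∀ t, u t = 0 → f t = 0) → HasCompactSupport f := fun f hzero =>
    husupp.mono <| Function.support_subset_iff'.2 fun t ht =>
      hzero t (Function.notMem_support.1 ht)
  have hint : ∀ f : ℝ → ℝ, Continuous f → (∀ t, u t = 0 → f t = 0) → Integrable f :=
    fun f hf hzero => hf.integrable_of_hasCompactSupport (hsupp f hzero)
  have hint₁ := hint (fun t => |deriv u t| * |u t| * deriv φ t) (by fun_prop) (by simp +contextual)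
  have hint₂ := hint (fun t => u t ^ 2 * |deriv (deriv φ) t|) (by fun_prop) (by simp +contextual)
  calc u x ^ 2 * deriv φ x ≤ ∫ t, |deriv (fun s => u s ^ 2 * deriv φ s) t| :=
        (hsupp _ (by simp +contextual)).le_integral_abs_deriv ((hu.pow 2).mul hφ1) x
    _ ≤ ∫ t, 2 * (|deriv u t| * |u t| * deriv φ t) + u t ^ 2 * |deriv (deriv φ) t| :=
        integral_mono_of_nonneg (.of_forall fun t => abs_nonneg _)
          ((hint₁.const_mul 2).add hint₂) <| .of_forall fun t =>
            abs_deriv_sq_mul_le (hu.differentiable one_ne_zero t)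
              (hφ1.differentiable one_ne_zero t) (hφ' t)
    _ = 2 * (∫ t, |deriv u t| * |u t| * deriv φ t) + ∫ t, u t ^ 2 * |deriv (deriv φ) t| := by
        rw [integral_add (hint₁.const_mul 2) hint₂, integral_const_mul]
    _ ≤ _ := by
        rw [mul_assoc]
        gcongr
        exact integral_abs_mul_abs_mul_le_sqrt_mul_sqrt hu'_cont hu.continuous hφ'_cont hφ'
          husupp.deriv husupp
end

section
/- There exists an absolute constant C > 0 with the following property: for every δ > 0, every continuously differentiable u : ℝ → ℝ with compact support, and every twice continuously differentiable φ : ℝ → ℝ with φ'(x) ≥ 0 for all x, one has ∫_ℝ u³ φ' dx ≤ δ ∫_ℝ (u')² φ' dx + C δ^{−1/3} (∫_ℝ u² φ' dx)^{1/3} (∫_ℝ u² √(φ') dx)^{4/3} + (∫_ℝ u² |φ''| dx)^{1/2} ∫_ℝ u² √(φ') dx. -/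
/-!
With `w = φ'`, the function `u² w` is C¹ with compact support, so each of its values is bounded by
`∫ |(u² w)'| ≤ 2 ∫ |u'| |u| w + ∫ u² |w'|`, and weighted Cauchy–Schwarz gives
`sup u² w ≤ 2 √A √B + D` with `A = ∫ u'² w`, `B = ∫ u² w`, `D = ∫ u² |w'|`.
Then `∫ u³ w ≤ sup (|u| √w) · E` with `E = ∫ u² √w`, and the term `√(2 √A √B) E` is absorbed
into `δ A + δ^(-1/3) B^(1/3) E^(4/3)` by Young's inequality with exponents 4 and 4/3, used in the
polynomial form `X⁴ ≤ 4 P Q³ → X ≤ P + Q` (the constant is `C = 1`).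
-/

open MeasureTheory

theorem Continuous.integrable_of_eq_zero_of_hasCompactSupport {X β E : Type*} [MeasurableSpace X]
    [TopologicalSpace X] [OpensMeasurableSpace X] {μ : Measure X} [IsFiniteMeasureOnCompacts μ]
    [Zero β] [NormedAddCommGroup E] {f : X → β} {g : X → E} (hg : Continuous g)
    (hf : HasCompactSupport f) (hfg : ∀ x, f x = 0 → g x = 0) : Integrable g μ :=
  hg.integrable_of_hasCompactSupport (hf.mono fun x hx h0 ↦ hx (hfg x h0))

theorem abs_le_integral_abs_deriv {f : ℝ → ℝ} (hf : ContDiff ℝ 1 f) (hcs : HasCompactSupport f)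
    (x : ℝ) : |f x| ≤ ∫ t, |deriv f t| := by
  rw [← hcs.integral_Iic_deriv_eq hf x]
  calc |∫ t in Set.Iic x, deriv f t| ≤ ∫ t in Set.Iic x, |deriv f t| :=
        abs_integral_le_integral_abs
    _ ≤ ∫ t, |deriv f t| :=
        setIntegral_le_integral
          ((hf.continuous_deriv le_rfl).abs.integrable_of_hasCompactSupport hcs.deriv.abs)
          (ae_of_all _ fun t ↦ abs_nonneg _)

theorem integral_abs_mul_abs_mul_le_sqrt_mul_sqrt_s4 {α : Type*} [MeasurableSpace α] {μ : Measure α}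
    {f g w : α → ℝ} (hw : ∀ x, 0 ≤ w x) (hf : AEStronglyMeasurable f μ)
    (hg : AEStronglyMeasurable g μ) (hwm : AEStronglyMeasurable w μ)
    (hfw : Integrable (fun x ↦ f x ^ 2 * w x) μ) (hgw : Integrable (fun x ↦ g x ^ 2 * w x) μ) :
    ∫ x, |f x| * |g x| * w x ∂μ ≤ √(∫ x, f x ^ 2 * w x ∂μ) * √(∫ x, g x ^ 2 * w x ∂μ) := by
  have hsqrt_w : AEStronglyMeasurable (fun x ↦ √(w x)) μ :=
    Real.continuous_sqrt.comp_aestronglyMeasurable hwm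
  have sq_eq (h : α → ℝ) (x : α) : (|h x| * √(w x)) ^ 2 = h x ^ 2 * w x := by
    rw [mul_pow, sq_abs, Real.sq_sqrt (hw x)]
  have memLp (h : α → ℝ) (hh : AEStronglyMeasurable h μ)
      (hhw : Integrable (fun x ↦ h x ^ 2 * w x) μ) :
      MemLp (fun x ↦ |h x| * √(w x)) (ENNReal.ofReal 2) μ := by
    rw [ENNReal.ofReal_ofNat,
      memLp_two_iff_integrable_sq (f := fun x ↦ |h x| * √(w x)) (hh.norm.mul hsqrt_w)]
    simpa only [sq_eq] using hhw
  have holder := integral_mul_le_Lp_mul_Lq_of_nonneg Real.HolderConjugate.two_two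
    (ae_of_all _ fun x ↦ by positivity) (ae_of_all _ fun x ↦ by positivity)
    (memLp f hf hfw) (memLp g hg hgw)
  simp only [Real.rpow_two, sq_eq, ← Real.sqrt_eq_rpow] at holder
  refine le_of_eq_of_le (integral_congr_ae (ae_of_all _ fun x ↦ ?_)) holder
  dsimp only
  rw [mul_mul_mul_comm, Real.mul_self_sqrt (hw x)]

theorem sq_mul_le_two_mul_sqrt_mul_sqrt_add_integral {u w : ℝ → ℝ} (hu : ContDiff ℝ 1 u)
    (hcs : HasCompactSupport u) (hw : ContDiff ℝ 1 w) (hw0 : ∀ x, 0 ≤ w x) (x : ℝ) :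
    u x ^ 2 * w x ≤ 2 * (√(∫ t, deriv u t ^ 2 * w t) * √(∫ t, u t ^ 2 * w t))
      + ∫ t, u t ^ 2 * |deriv w t| := by
  have hu' := hu.continuous_deriv le_rfl
  have hw' := hw.continuous_deriv le_rfl
  have hderiv (t : ℝ) :
      deriv (fun s ↦ u s ^ 2 * w s) t = 2 * u t * deriv u t * w t + u t ^ 2 * deriv w t := by
    have hu_t := (hu.differentiable one_ne_zero t).hasDerivAt
    have hw_t := (hw.differentiable one_ne_zero t).hasDerivAt
    rw [((hu_t.fun_pow 2).fun_mul hw_t).deriv]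
    push_cast
    ring
  have hint_mixed : Integrable (fun t ↦ |deriv u t| * |u t| * w t) :=
    (hu'.abs.mul hu.continuous.abs).mul hw.continuous
      |>.integrable_of_eq_zero_of_hasCompactSupport hcs fun t ht ↦ by simp [ht]
  have hint_curv : Integrable (fun t ↦ u t ^ 2 * |deriv w t|) :=
    (hu.continuous.pow 2).mul hw'.abs
      |>.integrable_of_eq_zero_of_hasCompactSupport hcs fun t ht ↦ by simp [ht]
  have hint_sq (v : ℝ → ℝ) (hv : Continuous v) (hvs : HasCompactSupport v) :
      Integrable (fun t ↦ v t ^ 2 * w t) :=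
    (hv.pow 2).mul hw.continuous |>.integrable_of_eq_zero_of_hasCompactSupport hvs
      fun t ht ↦ by simp [ht]
  calc u x ^ 2 * w x ≤ |u x ^ 2 * w x| := le_abs_self _
    _ ≤ ∫ t, |deriv (fun s ↦ u s ^ 2 * w s) t| :=
        abs_le_integral_abs_deriv ((hu.pow 2).mul hw)
          (hcs.mono fun t ht h0 ↦ ht (by simp [h0])) x
    _ ≤ ∫ t, (2 * (|deriv u t| * |u t| * w t) + u t ^ 2 * |deriv w t|) := by
        refine integral_mono_of_nonneg (ae_of_all _ fun t ↦ abs_nonneg _)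
          ((hint_mixed.const_mul 2).add hint_curv) (ae_of_all _ fun t ↦ ?_)
        dsimp only
        rw [hderiv]
        calc |2 * u t * deriv u t * w t + u t ^ 2 * deriv w t|
            ≤ |2 * u t * deriv u t * w t| + |u t ^ 2 * deriv w t| := abs_add_le _ _
          _ = 2 * (|deriv u t| * |u t| * w t) + u t ^ 2 * |deriv w t| := by
            simp only [abs_mul, abs_two, abs_pow, sq_abs, abs_of_nonneg (hw0 t)]
            ring
    _ = 2 * (∫ t, |deriv u t| * |u t| * w t) + ∫ t, u t ^ 2 * |deriv w t| := by
        rw [integral_add (hint_mixed.const_mul 2) hint_curv, integral_const_mul]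
    _ ≤ _ := by
        gcongr
        exact integral_abs_mul_abs_mul_le_sqrt_mul_sqrt_s4 hw0 hu'.aestronglyMeasurable
          hu.continuous.aestronglyMeasurable hw.continuous.aestronglyMeasurable
          (hint_sq _ hu' hcs.deriv) (hint_sq _ hu.continuous hcs)

theorem integral_cube_mul_le_sqrt_mul_integral {u w : ℝ → ℝ} (hu : Continuous u)
    (hcs : HasCompactSupport u) (hw : Continuous w) (hw0 : ∀ x, 0 ≤ w x) {S : ℝ}
    (hS : ∀ x, u x ^ 2 * w x ≤ S) :
    ∫ x, u x ^ 3 * w x ≤ √S * ∫ x, u x ^ 2 * √(w x) := by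
  rw [← integral_const_mul]
  refine integral_mono
    ((hu.pow 3).mul hw |>.integrable_of_eq_zero_of_hasCompactSupport hcs fun x hx ↦ by simp [hx])
    (continuous_const.mul ((hu.pow 2).mul hw.sqrt)
      |>.integrable_of_eq_zero_of_hasCompactSupport hcs fun x hx ↦ by simp [hx]) fun x ↦ ?_
  have hsup : |u x| * √(w x) ≤ √S := by
    rw [← Real.sqrt_sq_eq_abs, ← Real.sqrt_mul (sq_nonneg _)]
    exact Real.sqrt_le_sqrt (hS x)
  calc u x ^ 3 * w x = u x * u x ^ 2 * w x := by ring
    _ ≤ |u x| * u x ^ 2 * w x := by gcongr; exacts [hw0 x, le_abs_self (u x)]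
    _ = (|u x| * √(w x)) * (u x ^ 2 * √(w x)) := by
        rw [mul_mul_mul_comm, Real.mul_self_sqrt (hw0 x), mul_assoc]
    _ ≤ √S * (u x ^ 2 * √(w x)) := by gcongr

theorem sqrt_add_le_sqrt_add_sqrt (a b : ℝ) : √(a + b) ≤ √a + √b := by
  rw [Real.sqrt_le_left (by positivity)]
  nlinarith [Real.sq_sqrt' (x := a), Real.sq_sqrt' (x := b), le_max_left a 0, le_max_left b 0,
    mul_nonneg (Real.sqrt_nonneg a) (Real.sqrt_nonneg b)]

theorem le_add_of_pow_four_le {X P Q : ℝ} (hP : 0 ≤ P) (hQ : 0 ≤ Q)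
    (h : X ^ 4 ≤ 4 * P * Q ^ 3) : X ≤ P + Q := by
  refine le_of_pow_le_pow_left₀ four_ne_zero (by positivity) (h.trans ?_)
  have : 0 ≤ P ^ 4 + 4 * P ^ 3 * Q + 6 * P ^ 2 * Q ^ 2 + Q ^ 4 := by positivity
  linear_combination this

theorem sqrt_two_mul_sqrt_mul_sqrt_mul_le {A B E δ : ℝ} (hA : 0 ≤ A) (hB : 0 ≤ B) (hE : 0 ≤ E)
    (hδ : 0 < δ) :
    √(2 * (√A * √B)) * E ≤ δ * A + δ ^ (-(1 / 3 : ℝ)) * B ^ ((1 : ℝ) / 3) * E ^ ((4 : ℝ) / 3) := by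
  have hX : (√(2 * (√A * √B)) * E) ^ 4 = 4 * A * B * E ^ 4 := by
    rw [mul_pow, show 4 = 2 * 2 from rfl, pow_mul, Real.sq_sqrt (by positivity), mul_pow, mul_pow,
      Real.sq_sqrt hA, Real.sq_sqrt hB]
    ring
  have cube {x : ℝ} (hx : 0 ≤ x) (r : ℝ) : (x ^ r) ^ 3 = x ^ (3 * r) := by
    rw [← Real.rpow_mul_natCast hx, mul_comm]; norm_num
  have hQ : (δ ^ (-(1 / 3 : ℝ)) * B ^ ((1 : ℝ) / 3) * E ^ ((4 : ℝ) / 3)) ^ 3 = δ⁻¹ * B * E ^ 4 := by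
    rw [mul_pow, mul_pow, cube hδ.le, cube hB, cube hE]
    norm_num [Real.rpow_neg_one]
  apply le_add_of_pow_four_le (by positivity) (by positivity)
  rw [hX, hQ]
  exact le_of_eq (by field_simp)

/-- Estimate for the cubic weighted term: there is an absolute constant `C > 0` such that for
every `δ > 0`, every C¹ compactly supported `u` and every C² weight `φ` with `φ' ≥ 0`,
`∫ u³ φ' ≤ δ ∫ (u')² φ' + C δ^{−1/3} (∫ u² φ')^{1/3} (∫ u² √(φ'))^{4/3}
  + (∫ u² |φ''|)^{1/2} ∫ u² √(φ')`. -/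
theorem cubic_term_estimate :
    ∃ C : ℝ, 0 < C ∧
      ∀ (δ : ℝ), 0 < δ →
        ∀ (u φ : ℝ → ℝ), ContDiff ℝ 1 u → HasCompactSupport u →
          ContDiff ℝ 2 φ → (∀ x, 0 ≤ deriv φ x) →
          (∫ x : ℝ, (u x) ^ 3 * deriv φ x)
            ≤ δ * (∫ x : ℝ, (deriv u x) ^ 2 * deriv φ x)
              + C * δ ^ (-(1 / 3 : ℝ))
                * (∫ x : ℝ, (u x) ^ 2 * deriv φ x) ^ ((1 : ℝ) / 3)
                * (∫ x : ℝ, (u x) ^ 2 * Real.sqrt (deriv φ x)) ^ ((4 : ℝ) / 3)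
              + (∫ x : ℝ, (u x) ^ 2 * |deriv (deriv φ) x|) ^ ((1 : ℝ) / 2)
                * ∫ x : ℝ, (u x) ^ 2 * Real.sqrt (deriv φ x) := by
  refine ⟨1, one_pos, fun δ hδ u φ hu hcs hφ hφ' ↦ ?_⟩
  have hw : ContDiff ℝ 1 (deriv φ) := hφ.deriv' (n := 1)
  set A := ∫ x, deriv u x ^ 2 * deriv φ x
  set B := ∫ x, u x ^ 2 * deriv φ x
  set D := ∫ x, u x ^ 2 * |deriv (deriv φ) x|
  set E := ∫ x, u x ^ 2 * √(deriv φ x)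
  have hA : 0 ≤ A := integral_nonneg fun x ↦ mul_nonneg (sq_nonneg _) (hφ' x)
  have hB : 0 ≤ B := integral_nonneg fun x ↦ mul_nonneg (sq_nonneg _) (hφ' x)
  have hE : 0 ≤ E := integral_nonneg fun x ↦ by positivity
  calc ∫ x, u x ^ 3 * deriv φ x ≤ √(2 * (√A * √B) + D) * E :=
        integral_cube_mul_le_sqrt_mul_integral hu.continuous hcs hw.continuous hφ'
          (sq_mul_le_two_mul_sqrt_mul_sqrt_add_integral hu hcs hw hφ')
    _ ≤ √(2 * (√A * √B)) * E + √D * E := by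
        rw [← add_mul]; gcongr; exact sqrt_add_le_sqrt_add_sqrt _ _
    _ ≤ δ * A + δ ^ (-(1 / 3 : ℝ)) * B ^ ((1 : ℝ) / 3) * E ^ ((4 : ℝ) / 3) + √D * E := by
        gcongr; exact sqrt_two_mul_sqrt_mul_sqrt_mul_le hA hB hE hδ
    _ = _ := by rw [Real.sqrt_eq_rpow]; ring
end

section
/- There exists an absolute constant C > 0 with the following property: for every M ≥ 1, every continuously differentiable u : ℝ → ℝ with compact support, and every twice continuously differentiable φ : ℝ → ℝ satisfying φ(x) ≥ 1, 0 ≤ φ'(x) ≤ M, and |φ''(x)| ≤ M for all x, one has ∫_ℝ u³ φ' dx ≤ (1/4) ∫_ℝ (u')² φ' dx + C M² [ (∫_ℝ u² φ dx)^{5/3} + (∫_ℝ u² φ dx)^{3/2} ]. -/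
/-!
With `w = φ'`, the fundamental theorem of calculus bounds the supremum of `u² w` by `∫ |(u² w)'|`,
and AM–GM with a free weight `t > 0` turns this into `t ∫ (u')² w + (M/t + M) ∫ u²`. Since
`(|u| w)² ≤ M · u² w`, the cubic term is at most `√(M sup u² w) ∫ u²`, and `∫ u² ≤ ∫ u² φ` as
`φ ≥ 1`. Choosing `t = (∫ u² φ)^(-1/3)` balances the terms and gives the estimate with `C = 2`.
-/

open MeasureTheory

lemma HasCompactSupport.le_integral_abs_deriv_s5 {f : ℝ → ℝ} (hf : ContDiff ℝ 1 f)
    (hfc : HasCompactSupport f) (b : ℝ) : f b ≤ ∫ x, |deriv f x| := by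
  have hint : Integrable (deriv f) :=
    (hf.continuous_deriv le_rfl).integrable_of_hasCompactSupport hfc.deriv
  calc f b = ∫ x in Set.Iic b, deriv f x := (hfc.integral_Iic_deriv_eq hf b).symm
    _ ≤ ∫ x in Set.Iic b, |deriv f x| :=
      setIntegral_mono hint.integrableOn hint.abs.integrableOn fun x => le_abs_self _
    _ ≤ ∫ x, |deriv f x| :=
      setIntegral_le_integral hint.abs (.of_forall fun x => abs_nonneg _)

lemma HasCompactSupport.pow_mul {u w : ℝ → ℝ} (hu : HasCompactSupport u) {n : ℕ} (hn : n ≠ 0) :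
    HasCompactSupport fun x => u x ^ n * w x :=
  hu.mono fun x hx hux => hx (by simp [hux, hn])

lemma abs_two_mul_mul_mul_add_sq_mul_le {a b p q M t : ℝ} (ht : 0 < t) (hp : 0 ≤ p)
    (hpM : p ≤ M) (hq : |q| ≤ M) :
    |2 * a * b * p + a ^ 2 * q| ≤ t * (b ^ 2 * p) + (M / t + M) * a ^ 2 := by
  have amgm : |2 * a * b| ≤ t * b ^ 2 + a ^ 2 / t := by
    rw [abs_le]; constructor
    · have : 0 ≤ (t * b + a) ^ 2 / t := by positivity
      have hexpand : (t * b + a) ^ 2 / t = t * b ^ 2 + a ^ 2 / t + 2 * a * b := by field_simp; ring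
      linarith
    · have : 0 ≤ (t * b - a) ^ 2 / t := by positivity
      have hexpand : (t * b - a) ^ 2 / t = t * b ^ 2 + a ^ 2 / t - 2 * a * b := by field_simp; ring
      linarith
  calc |2 * a * b * p + a ^ 2 * q| ≤ |2 * a * b| * p + a ^ 2 * |q| := by
        refine (abs_add_le _ _).trans ?_
        rw [abs_mul _ p, abs_mul (a ^ 2) q, abs_of_nonneg hp, abs_sq]
    _ ≤ (t * b ^ 2 + a ^ 2 / t) * p + a ^ 2 * M := by gcongr
    _ ≤ t * (b ^ 2 * p) + (M / t + M) * a ^ 2 := by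
        have : a ^ 2 / t * p ≤ a ^ 2 / t * M := by gcongr
        have hexpand : (M / t + M) * a ^ 2 = a ^ 2 / t * M + a ^ 2 * M := by ring
        nlinarith

lemma cube_mul_le_sqrt_mul_sq {a p M S : ℝ} (hp : 0 ≤ p) (hpM : p ≤ M) (hS : a ^ 2 * p ≤ S) :
    a ^ 3 * p ≤ √(M * S) * a ^ 2 := by
  have hbound : |a| * p ≤ √(M * S) := by
    refine Real.le_sqrt_of_sq_le ?_
    calc (|a| * p) ^ 2 = p * (a ^ 2 * p) := by rw [mul_pow, sq_abs]; ring
      _ ≤ M * S := mul_le_mul hpM hS (by positivity) (hp.trans hpM)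
  calc a ^ 3 * p ≤ |a| ^ 3 * p := by
        rw [← abs_pow]; exact mul_le_mul_of_nonneg_right (le_abs_self _) hp
    _ = |a| * p * a ^ 2 := by rw [← sq_abs a]; ring
    _ ≤ √(M * S) * a ^ 2 := by gcongr

lemma sq_mul_le_of_abs_deriv_le {u w : ℝ → ℝ} {M t : ℝ} (hu : ContDiff ℝ 1 u)
    (huc : HasCompactSupport u) (hw : ContDiff ℝ 1 w) (hw0 : ∀ x, 0 ≤ w x) (hwM : ∀ x, w x ≤ M)
    (hw' : ∀ x, |deriv w x| ≤ M) (ht : 0 < t) (b : ℝ) :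
    u b ^ 2 * w b ≤ t * (∫ x, deriv u x ^ 2 * w x) + (M / t + M) * ∫ x, u x ^ 2 := by
  have hderiv : ∀ x, deriv (fun y => u y ^ 2 * w y) x
      = 2 * u x * deriv u x * w x + u x ^ 2 * deriv w x := fun x => by
    have hu_at := (hu.differentiable one_ne_zero x).hasDerivAt
    have hw_at := (hw.differentiable one_ne_zero x).hasDerivAt
    refine ((hu_at.pow 2).mul hw_at).deriv.trans ?_
    simp only [Pi.pow_apply]; push_cast; ring
  have hcont : Continuous (deriv u) := hu.continuous_deriv le_rfl
  have hint_D : Integrable fun x => deriv u x ^ 2 * w x :=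
    ((hcont.pow 2).mul hw.continuous).integrable_of_hasCompactSupport (huc.deriv.pow_mul two_ne_zero)
  have hint_J : Integrable fun x => u x ^ 2 :=
    (hu.continuous.pow 2).integrable_of_hasCompactSupport (huc.comp_left (zero_pow two_ne_zero))
  calc u b ^ 2 * w b ≤ ∫ x, |deriv (fun y => u y ^ 2 * w y) x| :=
        HasCompactSupport.le_integral_abs_deriv_s5 ((hu.pow 2).mul hw) (huc.pow_mul two_ne_zero) b
    _ ≤ ∫ x, (t * (deriv u x ^ 2 * w x) + (M / t + M) * u x ^ 2) := by
        refine integral_mono_of_nonneg (.of_forall fun x => abs_nonneg _)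
          ((hint_D.const_mul t).add (hint_J.const_mul _)) (.of_forall fun x => ?_)
        dsimp only
        rw [hderiv]
        exact abs_two_mul_mul_mul_add_sq_mul_le ht (hw0 x) (hwM x) (hw' x)
    _ = t * (∫ x, deriv u x ^ 2 * w x) + (M / t + M) * ∫ x, u x ^ 2 := by
        rw [integral_add (hint_D.const_mul t) (hint_J.const_mul _), integral_const_mul,
          integral_const_mul]

lemma integral_cube_mul_le_sqrt_mul_integral_sq {u w : ℝ → ℝ} {M S : ℝ} (hu : Continuous u)
    (huc : HasCompactSupport u) (hw : Continuous w) (hw0 : ∀ x, 0 ≤ w x) (hwM : ∀ x, w x ≤ M)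
    (hS : ∀ x, u x ^ 2 * w x ≤ S) :
    ∫ x, u x ^ 3 * w x ≤ √(M * S) * ∫ x, u x ^ 2 := by
  have hint_J : Integrable fun x => u x ^ 2 :=
    (hu.pow 2).integrable_of_hasCompactSupport (huc.comp_left (zero_pow two_ne_zero))
  rw [← integral_const_mul]
  exact integral_mono (((hu.pow 3).mul hw).integrable_of_hasCompactSupport
    (huc.pow_mul three_ne_zero)) (hint_J.const_mul _)
    fun x => cube_mul_le_sqrt_mul_sq (hw0 x) (hwM x) (hS x)

lemma exists_pos_sqrt_mul_le {D E M : ℝ} (hD : 0 ≤ D) (hE : 0 ≤ E) (hM : 0 ≤ M) :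
    ∃ t > 0, √(M * (t * D + (M / t + M) * E)) * E
      ≤ D / 4 + 2 * M * E ^ ((5 : ℝ) / 3) + M * E ^ ((3 : ℝ) / 2) := by
  -- The optimal weight is `t = E^(-1/3)`; writing `E = e⁶` keeps every power integral.
  rcases hE.eq_or_lt with rfl | hE
  · exact ⟨1, one_pos, by rw [mul_zero]; positivity⟩
  obtain ⟨e, he, rfl⟩ : ∃ e > 0, e ^ 6 = E :=
    ⟨E ^ ((6 : ℕ)⁻¹ : ℝ), by positivity, Real.rpow_inv_natCast_pow hE.le (by norm_num)⟩
  have hpow : ∀ (r : ℝ) (n : ℕ), 6 * r = n → (e ^ 6) ^ r = e ^ n := fun r n h => by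
    rw [← Real.rpow_natCast, ← Real.rpow_mul he.le, ← Real.rpow_natCast]; push_cast [h]; rfl
  refine ⟨(e ^ 2)⁻¹, by positivity, ?_⟩
  have hsq : ∀ X, √X * e ^ 6 = √(X * (e ^ 6) ^ 2) := fun X => by
    rw [Real.sqrt_mul' _ (by positivity), Real.sqrt_sq (by positivity)]
  rw [hpow _ 10 (by norm_num), hpow _ 9 (by norm_num), hsq, Real.sqrt_le_left (by positivity)]
  have key : (D / 4 + 2 * M * e ^ 10 + M * e ^ 9) ^ 2
      - M * ((e ^ 2)⁻¹ * D + (M / (e ^ 2)⁻¹ + M) * e ^ 6) * (e ^ 6) ^ 2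
      = D ^ 2 / 16 + 3 * M ^ 2 * e ^ 20 + D * M * e ^ 9 / 2 + 4 * M ^ 2 * e ^ 19 := by
    field_simp; ring
  nlinarith [show 0 ≤ D ^ 2 / 16 + 3 * M ^ 2 * e ^ 20 + D * M * e ^ 9 / 2 + 4 * M ^ 2 * e ^ 19
    by positivity]

/-- Key energy estimate: there is an absolute constant `C > 0` such that for every `M ≥ 1`,
every C¹ compactly supported `u` and every C² weight `φ` with `φ ≥ 1`, `0 ≤ φ' ≤ M`,
`|φ''| ≤ M`, one has
`∫ u³ φ' ≤ (1/4) ∫ (u')² φ' + C M² [(∫ u² φ)^{5/3} + (∫ u² φ)^{3/2}]`. -/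
theorem cubic_term_energy_estimate :
    ∃ C : ℝ, 0 < C ∧
      ∀ (M : ℝ), 1 ≤ M →
        ∀ (u φ : ℝ → ℝ), ContDiff ℝ 1 u → HasCompactSupport u →
          ContDiff ℝ 2 φ → (∀ x, 1 ≤ φ x) →
          (∀ x, 0 ≤ deriv φ x) → (∀ x, deriv φ x ≤ M) →
          (∀ x, |deriv (deriv φ) x| ≤ M) →
          (∫ x : ℝ, (u x) ^ 3 * deriv φ x)
            ≤ (1 / 4) * (∫ x : ℝ, (deriv u x) ^ 2 * deriv φ x)
              + C * M ^ 2 *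
                ((∫ x : ℝ, (u x) ^ 2 * φ x) ^ ((5 : ℝ) / 3)
                  + (∫ x : ℝ, (u x) ^ 2 * φ x) ^ ((3 : ℝ) / 2)) := by
  refine ⟨2, two_pos, fun M hM u φ hu huc hφ hφ1 hφ'0 hφ'M hφ'' => ?_⟩
  have hφ' : ContDiff ℝ 1 (deriv φ) := hφ.deriv' (n := 1)
  set E := ∫ x, u x ^ 2 * φ x
  set D := ∫ x, deriv u x ^ 2 * deriv φ x
  have hJE : ∫ x, u x ^ 2 ≤ E :=
    integral_mono ((hu.continuous.pow 2).integrable_of_hasCompactSupport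
      (huc.comp_left (zero_pow two_ne_zero)))
      (((hu.continuous.pow 2).mul hφ.continuous).integrable_of_hasCompactSupport
        (huc.pow_mul two_ne_zero))
      fun x => le_mul_of_one_le_right (sq_nonneg _) (hφ1 x)
  have hE : 0 ≤ E := integral_nonneg fun x => mul_nonneg (sq_nonneg _) (zero_le_one.trans (hφ1 x))
  have hD : 0 ≤ D := integral_nonneg fun x => mul_nonneg (sq_nonneg _) (hφ'0 x)
  have hM0 : 0 ≤ M := zero_le_one.trans hM
  obtain ⟨t, ht, hopt⟩ := exists_pos_sqrt_mul_le hD hE hM0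
  have hsup : ∀ x, u x ^ 2 * deriv φ x ≤ t * D + (M / t + M) * E := fun x =>
    (sq_mul_le_of_abs_deriv_le hu huc hφ' hφ'0 hφ'M hφ'' ht x).trans (by gcongr)
  have hMM : M ≤ M ^ 2 := by nlinarith
  calc ∫ x, u x ^ 3 * deriv φ x ≤ √(M * (t * D + (M / t + M) * E)) * ∫ x, u x ^ 2 :=
        integral_cube_mul_le_sqrt_mul_integral_sq hu.continuous huc hφ'.continuous hφ'0 hφ'M hsup
    _ ≤ √(M * (t * D + (M / t + M) * E)) * E := mul_le_mul_of_nonneg_left hJE (Real.sqrt_nonneg _)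
    _ ≤ D / 4 + 2 * M * E ^ ((5 : ℝ) / 3) + M * E ^ ((3 : ℝ) / 2) := hopt
    _ ≤ 1 / 4 * D + 2 * M ^ 2 * (E ^ ((5 : ℝ) / 3) + E ^ ((3 : ℝ) / 2)) := by
        have h53 : 0 ≤ E ^ ((5 : ℝ) / 3) := by positivity
        have h32 : 0 ≤ E ^ ((3 : ℝ) / 2) := by positivity
        nlinarith
end

section
/- For every natural number r there exists a constant C > 0, depending only on r, such that for every real polynomial p of degree at most r and all real numbers a < b, sup_{x ∈ [a,b]} (p'(x))² ≤ (C / (b − a)³) ∫_a^b p(x)² dx. -/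
open MeasureTheory intervalIntegral

/-! A polynomial of degree at most `r` is determined by its `r + 1` coefficients, and on this
finite-dimensional space `c ↦ ∫₀¹ p²` is continuous, 2-homogeneous and positive away from `0`,
so by compactness of the unit sphere it dominates the squared size of the coefficients; these in
turn bound `p'` on `[0, 1]`. The affine substitution `[0, 1] → [a, b]` multiplies `p'` by `b - a`
and `∫ p²` by `(b - a)⁻¹`, which produces the factor `(b - a)⁻³`. -/

open Polynomial

theorem exists_pos_mul_norm_sq_le_of_homogeneous {E : Type*} [NormedAddCommGroup E]
    [NormedSpace ℝ E] [FiniteDimensional ℝ E] [Nontrivial E] {Q : E → ℝ} (hQ : Continuous Q)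
    (hsmul : ∀ (s : ℝ) (c : E), Q (s • c) = s ^ 2 * Q c) (hpos : ∀ c ≠ 0, 0 < Q c) :
    ∃ m > 0, ∀ c, m * ‖c‖ ^ 2 ≤ Q c := by
  have : ProperSpace E := FiniteDimensional.proper_rclike ℝ E
  obtain ⟨c₀, hc₀, hmin⟩ := (isCompact_sphere (0 : E) 1).exists_isMinOn
    (NormedSpace.sphere_nonempty.mpr zero_le_one) hQ.continuousOn
  refine ⟨Q c₀, hpos c₀ (ne_zero_of_mem_unit_sphere ⟨c₀, hc₀⟩), fun c => ?_⟩
  rcases eq_or_ne c 0 with rfl | hc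
  · simpa using (hsmul 0 0).ge
  have hnorm : ‖c‖ ≠ 0 := norm_ne_zero_iff.mpr hc
  have hunit : ‖c‖⁻¹ • c ∈ Metric.sphere (0 : E) 1 := by
    simp [norm_smul, hnorm]
  calc Q c₀ * ‖c‖ ^ 2 ≤ Q (‖c‖⁻¹ • c) * ‖c‖ ^ 2 := by gcongr; exact hmin hunit
    _ = Q c := by rw [hsmul, mul_comm, ← mul_assoc, ← mul_pow, mul_inv_cancel₀ hnorm, one_pow,
      one_mul]

namespace Polynomial

theorem integral_sq_eval_pos {p : ℝ[X]} (hp : p ≠ 0) {a b : ℝ} (hab : a < b) :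
    0 < ∫ t in a..b, (p.eval t) ^ 2 := by
  obtain ⟨x, hx, hroot⟩ : ∃ x ∈ Set.Icc a b, ¬ p.IsRoot x :=
    Set.not_subset.mp fun hsub =>
      Set.Icc_infinite hab ((finite_setOfPred_isRoot hp).subset hsub)
  exact integral_pos hab (by fun_prop) (fun _ _ => sq_nonneg _)
    ⟨x, hx, pow_two_pos_of_ne_zero hroot⟩

theorem abs_eval_le_of_abs_coeff_le {p : ℝ[X]} {n : ℕ} (hp : p.natDegree < n) {M : ℝ}
    (hM : ∀ i < n, |p.coeff i| ≤ M) {x : ℝ} (hx : |x| ≤ 1) : |p.eval x| ≤ n * M := by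
  rw [eval_eq_sum_range' hp]
  calc |∑ i ∈ Finset.range n, p.coeff i * x ^ i|
      ≤ ∑ i ∈ Finset.range n, |p.coeff i * x ^ i| := Finset.abs_sum_le_sum_abs _ _
    _ ≤ ∑ _i ∈ Finset.range n, M := by
      refine Finset.sum_le_sum fun i hi => ?_
      rw [abs_mul, abs_pow]
      exact (mul_le_of_le_one_right (abs_nonneg _) (pow_le_one₀ (abs_nonneg x) hx)).trans
        (hM i (Finset.mem_range.mp hi))
    _ = n * M := by simp

theorem exists_sq_coeff_le_integral_sq (r : ℕ) {a b : ℝ} (hab : a < b) :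
    ∃ K > 0, ∀ p : ℝ[X], p.natDegree ≤ r → ∀ n,
      (p.coeff n) ^ 2 ≤ K * ∫ t in a..b, (p.eval t) ^ 2 := by
  set e := degreeLTEquiv ℝ (r + 1)
  have heval (c : Fin (r + 1) → ℝ) (t : ℝ) :
      (e.symm c : ℝ[X]).eval t = ∑ i, c i * t ^ (i : ℕ) := by
    rw [eval_eq_sum_degreeLTEquiv (e.symm c).2, Subtype.coe_eta, e.apply_symm_apply]
  have hcont : Continuous fun c => ∫ t in a..b, ((e.symm c : ℝ[X]).eval t) ^ 2 := by
    simp only [heval]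
    exact continuous_parametric_intervalIntegral_of_continuous' (by fun_prop) a b
  obtain ⟨m, hm, hQ⟩ := exists_pos_mul_norm_sq_le_of_homogeneous hcont
    (fun s c => by simp only [map_smul, Submodule.coe_smul, eval_smul, smul_eq_mul, mul_pow,
      intervalIntegral.integral_const_mul])
    (fun c hc => integral_sq_eval_pos (by simpa using hc) hab)
  refine ⟨m⁻¹, inv_pos.mpr hm, fun p hp n => ?_⟩
  have hp' : p ∈ degreeLT ℝ (r + 1) := by
    rw [degreeLT_succ_eq_degreeLE, mem_degreeLE]; exact natDegree_le_iff_degree_le.mp hp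
  have hI := hQ (e ⟨p, hp'⟩)
  simp only [e.symm_apply_apply] at hI
  rcases lt_or_ge r n with hn | hn
  · rw [coeff_eq_zero_of_natDegree_lt (hp.trans_lt hn), sq, zero_mul]
    exact mul_nonneg (inv_nonneg.mpr hm.le) (integral_nonneg hab.le fun _ _ => sq_nonneg _)
  calc (p.coeff n) ^ 2 = (e ⟨p, hp'⟩ ⟨n, Nat.lt_succ_of_le hn⟩) ^ 2 := rfl
    _ ≤ ‖e ⟨p, hp'⟩‖ ^ 2 := by
      rw [← sq_abs, ← Real.norm_eq_abs]; gcongr; exact norm_le_pi_norm _ _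
    _ ≤ m⁻¹ * ∫ t in a..b, (p.eval t) ^ 2 := by
      rw [le_inv_mul_iff₀ hm]; exact hI

theorem exists_sq_eval_derivative_le_integral_sq (r : ℕ) :
    ∃ C > 0, ∀ p : ℝ[X], p.natDegree ≤ r → ∀ x, |x| ≤ 1 →
      ((derivative p).eval x) ^ 2 ≤ C * ∫ t in (0 : ℝ)..1, (p.eval t) ^ 2 := by
  obtain ⟨K, hK, hcoeff⟩ := exists_sq_coeff_le_integral_sq r zero_lt_one
  refine ⟨((r : ℝ) + 1) ^ 4 * K, by positivity, fun p hp x hx => ?_⟩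
  set M := √(K * ∫ t in (0 : ℝ)..1, (p.eval t) ^ 2)
  have hderiv_coeff : ∀ i < r + 1, |(derivative p).coeff i| ≤ ((r : ℝ) + 1) * M := by
    intro i hi
    rw [coeff_derivative, abs_mul, mul_comm]
    gcongr
    · rw [abs_of_nonneg (by positivity)]; exact_mod_cast hi
    · exact Real.abs_le_sqrt (hcoeff p hp _)
  have hdeg : (derivative p).natDegree < r + 1 :=
    (natDegree_derivative_le p).trans_lt (by omega)
  have habs := abs_eval_le_of_abs_coeff_le hdeg hderiv_coeff hx
  calc ((derivative p).eval x) ^ 2 ≤ (((r + 1 : ℕ) : ℝ) * (((r : ℝ) + 1) * M)) ^ 2 := by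
        rw [← sq_abs]; gcongr
    _ = ((r : ℝ) + 1) ^ 4 * K * ∫ t in (0 : ℝ)..1, (p.eval t) ^ 2 := by
        rw [mul_pow, mul_pow, Real.sq_sqrt
          (mul_nonneg hK.le (integral_nonneg zero_le_one fun _ _ => sq_nonneg _))]
        push_cast; ring

theorem eval_derivative_comp_linear (p : ℝ[X]) (d a t : ℝ) :
    (derivative (p.comp (C d * X + C a))).eval t = d * (derivative p).eval (d * t + a) := by
  simp [derivative_comp]

theorem integral_sq_eval_comp_linear (p : ℝ[X]) {d : ℝ} (hd : d ≠ 0) (a : ℝ) :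
    ∫ t in (0 : ℝ)..1, ((p.comp (C d * X + C a)).eval t) ^ 2
      = d⁻¹ * ∫ t in a..a + d, (p.eval t) ^ 2 := by
  simpa [eval_comp, add_comm d a] using
    integral_comp_mul_add (fun y => (p.eval y) ^ 2) hd a (a := 0) (b := 1)

end Polynomial

/-- Combined inverse inequality for polynomials of degree at most `r`: there is a constant
`C > 0` depending only on `r` such that for every such polynomial `p` and all `a < b`,
`sup_{x ∈ [a,b]} (p'(x))² ≤ (C/(b − a)³) ∫_a^b p(x)² dx`. -/
theorem polynomial_inverse_inequality_sup_deriv (r : ℕ) :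
    ∃ C : ℝ, 0 < C ∧
      ∀ (p : Polynomial ℝ), p.natDegree ≤ r →
        ∀ (a b : ℝ), a < b →
          ∀ x ∈ Set.Icc a b,
            ((Polynomial.derivative p).eval x) ^ 2
              ≤ (C / (b - a) ^ 3) * ∫ t in a..b, (p.eval t) ^ 2 := by
  obtain ⟨C₀, hC₀, hbound⟩ := exists_sq_eval_derivative_le_integral_sq r
  refine ⟨C₀, hC₀, fun p hp a b hab x hx => ?_⟩
  have hd : 0 < b - a := sub_pos.mpr hab
  have hq : (p.comp (C (b - a) * X + C a)).natDegree ≤ r :=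
    natDegree_comp_le.trans ((Nat.mul_le_mul hp natDegree_linear_le).trans_eq r.mul_one)
  set t := (x - a) / (b - a)
  have ht : |t| ≤ 1 := abs_le.mpr
    ⟨by linarith [div_nonneg (sub_nonneg.mpr hx.1) hd.le],
      (div_le_one hd).mpr (by linarith [hx.2])⟩
  have hxt : (b - a) * t + a = x := by simp only [t]; field_simp; ring
  have key := hbound _ hq t ht
  rw [eval_derivative_comp_linear, hxt, integral_sq_eval_comp_linear p hd.ne',
    add_sub_cancel, mul_pow] at key
  rw [show C₀ / (b - a) ^ 3 * ∫ t in a..b, (p.eval t) ^ 2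
      = C₀ * ((b - a)⁻¹ * ∫ t in a..b, (p.eval t) ^ 2) / (b - a) ^ 2 by field_simp]
  exact (le_div_iff₀' (by positivity)).mpr key
end

section
/- For every real number R ≥ 1 there exists a constant C > 0, depending only on R, such that for every continuously differentiable function u : ℝ → ℝ and every x ∈ [−R+1, R−1], |u(x)| ≤ C ( ∫_{−R}^{R} ( u(t)² + (u'(t))² ) dt )^{1/2}. -/
/-!
Let `y` be a point where `u²` is smallest on `[a, b]`; then `(b - a) u(y)² ≤ ∫ u²`.
By the fundamental theorem of calculus `u(x)² - u(y)² = ∫_y^x 2 u u'`, and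
`|2 u u'| ≤ u² + u'²`, so `u(x)² ≤ ((b - a)⁻¹ + 1) ∫_a^b (u² + u'²)` for every `x ∈ [a, b]`.
On `[-R, R]` with `R ≥ 1` the factor is at most `4`, which gives `C = 2`.
-/

open MeasureTheory intervalIntegral Set
open scoped Interval

theorem exists_mul_le_intervalIntegral {f : ℝ → ℝ} {a b : ℝ} (hab : a ≤ b)
    (hf : ContinuousOn f (Icc a b)) : ∃ y ∈ Icc a b, (b - a) * f y ≤ ∫ t in a..b, f t := by
  obtain ⟨y, hy, hmin⟩ := isCompact_Icc.exists_isMinOn (nonempty_Icc.mpr hab) hf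
  refine ⟨y, hy, ?_⟩
  simpa using integral_mono_on hab (intervalIntegrable_const (μ := volume))
    (hf.intervalIntegrable_of_Icc hab) fun t ht => hmin ht

theorem norm_intervalIntegral_le_integral_norm_of_mem_Icc {E : Type*} [NormedAddCommGroup E]
    [NormedSpace ℝ E] {f : ℝ → E} {a b x y : ℝ}
    (hf : IntegrableOn f (Icc a b)) (hx : x ∈ Icc a b) (hy : y ∈ Icc a b) :
    ‖∫ t in y..x, f t‖ ≤ ∫ t in a..b, ‖f t‖ :=
  calc ‖∫ t in y..x, f t‖
    _ ≤ ∫ t in Ι y x, ‖f t‖ := norm_integral_le_integral_norm_uIoc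
    _ ≤ ∫ t in Icc a b, ‖f t‖ :=
      setIntegral_mono_set hf.norm (Filter.Eventually.of_forall fun t => norm_nonneg _)
        (uIoc_subset_uIcc.trans (uIcc_subset_Icc hy hx)).eventuallyLE
    _ = ∫ t in a..b, ‖f t‖ := by
      rw [integral_of_le (hx.1.trans hx.2), integral_Icc_eq_integral_Ioc]

theorem abs_two_mul_le_add_sq {α : Type*} [CommRing α] [LinearOrder α] [IsStrictOrderedRing α]
    (a b : α) : |2 * a * b| ≤ a ^ 2 + b ^ 2 := by
  rw [abs_mul, abs_mul, abs_two, ← sq_abs a, ← sq_abs b]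
  exact two_mul_le_add_sq _ _

theorem sq_le_sq_add_integral_sq_add_sq_deriv {u : ℝ → ℝ} (hu : ContDiff ℝ 1 u)
    {a b x y : ℝ} (hx : x ∈ Icc a b) (hy : y ∈ Icc a b) :
    u x ^ 2 ≤ u y ^ 2 + ∫ t in a..b, (u t ^ 2 + deriv u t ^ 2) := by
  have hu' : Continuous (deriv u) := hu.continuous_deriv le_rfl
  have hderiv (t : ℝ) : HasDerivAt (fun s => u s ^ 2) (2 * u t * deriv u t) t := by
    simpa [mul_comm, mul_assoc, mul_left_comm] using
      ((hu.differentiable one_ne_zero t).hasDerivAt).fun_pow 2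
  have hcont : Continuous fun t => 2 * u t * deriv u t :=
    (continuous_const.mul hu.continuous).mul hu'
  have hftc : ∫ t in y..x, 2 * u t * deriv u t = u x ^ 2 - u y ^ 2 :=
    integral_eq_sub_of_hasDerivAt (fun t _ => hderiv t) (hcont.intervalIntegrable _ _)
  have hbound : |∫ t in y..x, 2 * u t * deriv u t| ≤ ∫ t in a..b, (u t ^ 2 + deriv u t ^ 2) :=
    (norm_intervalIntegral_le_integral_norm_of_mem_Icc hcont.integrableOn_Icc hx hy).trans <|
      integral_mono_on (hx.1.trans hx.2) (hcont.norm.intervalIntegrable _ _)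
        ((by fun_prop : Continuous fun t => u t ^ 2 + deriv u t ^ 2).intervalIntegrable _ _)
        fun t _ => abs_two_mul_le_add_sq _ _
  linarith [le_abs_self (∫ t in y..x, 2 * u t * deriv u t)]

theorem sq_le_mul_integral_sq_add_sq_deriv {u : ℝ → ℝ} (hu : ContDiff ℝ 1 u) {a b x : ℝ}
    (hab : a < b) (hx : x ∈ Icc a b) :
    u x ^ 2 ≤ ((b - a)⁻¹ + 1) * ∫ t in a..b, (u t ^ 2 + deriv u t ^ 2) := by
  have hcont : Continuous fun t => u t ^ 2 + deriv u t ^ 2 :=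
    (hu.continuous.pow 2).add ((hu.continuous_deriv le_rfl).pow 2)
  obtain ⟨y, hy, hmean⟩ :=
    exists_mul_le_intervalIntegral hab.le (hu.continuous.pow 2).continuousOn
  have hy_small : u y ^ 2 ≤ (b - a)⁻¹ * ∫ t in a..b, (u t ^ 2 + deriv u t ^ 2) := by
    rw [le_inv_mul_iff₀ (sub_pos.mpr hab)]
    exact hmean.trans <| integral_mono_on hab.le ((hu.continuous.pow 2).intervalIntegrable _ _)
      (hcont.intervalIntegrable _ _) fun t _ => le_add_of_nonneg_right (sq_nonneg _)
  linarith [sq_le_sq_add_integral_sq_add_sq_deriv hu hx hy]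

/-- Local Sobolev (H¹ → L∞) embedding: for every `R ≥ 1` there is a constant `C > 0`,
depending only on `R`, such that for every C¹ function `u : ℝ → ℝ` and every
`x ∈ [−R+1, R−1]`, `|u(x)| ≤ C (∫_{−R}^{R} (u² + (u')²))^{1/2}`. -/
theorem local_sobolev_embedding (R : ℝ) (hR : 1 ≤ R) :
    ∃ C : ℝ, 0 < C ∧
      ∀ (u : ℝ → ℝ), ContDiff ℝ 1 u →
        ∀ x ∈ Set.Icc (-R + 1) (R - 1),
          |u x| ≤ C * Real.sqrt (∫ t in (-R)..R, ((u t) ^ 2 + (deriv u t) ^ 2)) := by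
  refine ⟨2, two_pos, fun u hu x hx => ?_⟩
  set I := ∫ t in (-R)..R, ((u t) ^ 2 + (deriv u t) ^ 2)
  have hI : 0 ≤ I := integral_nonneg (by linarith) fun t _ => by positivity
  have hconst : (R - -R)⁻¹ + 1 ≤ 2 ^ 2 := by
    have : (R - -R)⁻¹ ≤ 1 := inv_le_one_of_one_le₀ (by linarith)
    linarith
  have hxR : x ∈ Icc (-R) R := ⟨by linarith [hx.1], by linarith [hx.2]⟩
  have hsq : u x ^ 2 ≤ 2 ^ 2 * I :=
    (sq_le_mul_integral_sq_add_sq_deriv hu (by linarith) hxR).trans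
      (mul_le_mul_of_nonneg_right hconst hI)
  calc |u x| ≤ Real.sqrt (2 ^ 2 * I) := Real.abs_le_sqrt hsq
    _ = 2 * Real.sqrt I := by rw [Real.sqrt_mul' _ hI, Real.sqrt_sq zero_le_two]
end
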